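/- arXiv:2601.13991 — 5 statements merged into one kernel-verified Lean document; each statement's English description precedes it below -/
import Mathlib

section
/- Let S be a type, P : S → S → ℝ≥0∞ and g : S → ℝ≥0∞. Define A : (S → ℝ≥0∞) → (S → ℝ≥0∞) by A(ν)(s) := ∑'_{s'} ν(s')·P(s', s), and let Φ be the monotone map on the complete lattice of functions S → ℝ≥0∞ given by Φ(ν) := g + A(ν) (pointwise). Then the least fixed point of Φ equals the function s ↦ ∑'_{k ∈ ℕ} (A^[k] g)(s), i.e., lfp Φ = ∑'_{k ∈ ℕ} A-iterates of g applied pointwise. -/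
open scoped ENNReal

/-- The least fixed point of `ν ↦ g + A ν`, where `A ν s = ∑' s', ν s' * P s' s`,
equals `s ↦ ∑' k, (A^[k] g) s`. -/
theorem lfp_eq_tsum_iterates {S : Type*} (P : S → S → ℝ≥0∞) (g : S → ℝ≥0∞)
    (A : (S → ℝ≥0∞) → (S → ℝ≥0∞))
    (hA : ∀ ν s, A ν s = ∑' s', ν s' * P s' s)
    (Φ : (S → ℝ≥0∞) →o (S → ℝ≥0∞))
    (hΦ : ∀ ν, Φ ν = g + A ν) :
    OrderHom.lfp Φ = fun s => ∑' k : ℕ, (A^[k] g) s := by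
  have hmono : ∀ ν ν' : S → ℝ≥0∞, ν ≤ ν' → A ν ≤ A ν' := by
    intro ν ν' h s
    rw [hA, hA]
    exact ENNReal.tsum_le_tsum fun s' => mul_le_mul_left (h s') _
  have hadd : ∀ ν ν' : S → ℝ≥0∞, A (ν + ν') = A ν + A ν' := by
    intro ν ν'
    funext s
    simp only [hA, Pi.add_apply, add_mul]
    exact ENNReal.tsum_add
  have htsum : ∀ (f : ℕ → S → ℝ≥0∞),
      A (fun s => ∑' k, f k s) = fun s => ∑' k, A (f k) s := by
    intro f
    funext s
    calc A (fun s => ∑' k, f k s) s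
        = ∑' s' : S, ∑' k : ℕ, f k s' * P s' s := by
          rw [hA]
          exact tsum_congr fun s' => ENNReal.tsum_mul_right.symm
      _ = ∑' k : ℕ, ∑' s' : S, f k s' * P s' s := ENNReal.tsum_comm
      _ = ∑' k : ℕ, A (f k) s := tsum_congr fun k => (hA _ _).symm
  set F : S → ℝ≥0∞ := fun s => ∑' k : ℕ, (A^[k] g) s with hF
  have hfix : Φ F = F := by
    rw [hΦ, htsum]
    funext s
    have hshift : ∀ k : ℕ, A (A^[k] g) s = (A^[k + 1] g) s := by
      intro k; rw [Function.iterate_succ_apply']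
    simp only [Pi.add_apply, hshift, hF]
    rw [tsum_eq_zero_add' (f := fun k : ℕ => (A^[k] g) s) ENNReal.summable]
    simp
  apply le_antisymm
  · exact OrderHom.lfp_le Φ (le_of_eq hfix)
  · intro s
    have key : ∀ n : ℕ, (∑ i ∈ Finset.range n, fun t => (A^[i] g) t) ≤ OrderHom.lfp Φ := by
      intro n
      induction n with
      | zero => simp
      | succ n ih =>
        have hsum : (∑ i ∈ Finset.range (n + 1), fun t => (A^[i] g) t)
            = (g + A (∑ i ∈ Finset.range n, fun t => (A^[i] g) t)) := by
          have hAfin : ∀ m : ℕ, A (∑ i ∈ Finset.range m, fun t => (A^[i] g) t)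
              = ∑ i ∈ Finset.range m, fun t => (A^[i + 1] g) t := by
            intro m
            induction m with
            | zero =>
              simp only [Finset.sum_range_zero]
              funext t
              rw [hA]
              simp
            | succ m ihm =>
              rw [Finset.sum_range_succ, hadd, ihm, Finset.sum_range_succ]
              congr 1
              funext t
              rw [Function.iterate_succ_apply']
          rw [hAfin, Finset.sum_range_succ']
          simp only [Function.iterate_zero, id]
          rw [add_comm]
        rw [hsum]
        calc g + A (∑ i ∈ Finset.range n, fun t => (A^[i] g) t)
            ≤ g + A (OrderHom.lfp Φ) := add_le_add le_rfl (hmono _ _ ih)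
          _ = Φ (OrderHom.lfp Φ) := (hΦ _).symm
          _ = OrderHom.lfp Φ := OrderHom.map_lfp Φ
    refine ENNReal.tsum_le_of_sum_range_le fun n => ?_
    calc ∑ i ∈ Finset.range n, (A^[i] g) s
        = (∑ i ∈ Finset.range n, fun t => (A^[i] g) t) s := by simp [Finset.sum_apply]
      _ ≤ OrderHom.lfp Φ s := key n s
end

section
/- Let S be a type, φ : S → Prop a decidable guard predicate, P : S → S → ℝ≥0∞, and g : S → ℝ≥0∞. Define Φ(ν)(s) := g(s) + ∑'_{s'} (if φ(s') then ν(s') else 0)·P(s', s), a monotone map on the complete lattice of functions S → ℝ≥0∞, and let lfp Φ be its least fixed point. Assume (i) every guard-satisfying row of P is stochastic: for all s with φ(s), ∑'_{t} P(s, t) = 1; and suppose I : S → ℝ≥0∞ satisfies (1) Φ(I) ≤ I pointwise, (2) ∑'_{s} I(s) ≠ ∞, and (3) ∑'_{s} (if φ(s) then 0 else I(s)) = ∑'_{s} g(s). Then for every s with ¬φ(s) we have (lfp Φ)(s) = I(s). -/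
open scoped ENNReal

/-- Proof rule for the exact posterior measure: a finite-mass occupation superinvariant `I`
whose guard-violating part has the same total mass as the initial measure `g`
coincides with the least fixed point on all states violating the guard. -/
theorem superinvariant_exact_posterior {S : Type*} (φ : S → Prop) [DecidablePred φ]
    (P : S → S → ℝ≥0∞) (g : S → ℝ≥0∞)
    (Φ : (S → ℝ≥0∞) →o (S → ℝ≥0∞))
    (hΦ : ∀ ν s, Φ ν s = g s + ∑' s', (if φ s' then ν s' else 0) * P s' s)
    (hrow : ∀ s, φ s → ∑' t, P s t = 1)
    (I : S → ℝ≥0∞)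
    (h1 : Φ I ≤ I)
    (h2 : ∑' s, I s ≠ ∞)
    (h3 : ∑' s, (if φ s then 0 else I s) = ∑' s, g s) :
    ∀ s, ¬ φ s → OrderHom.lfp Φ s = I s := by
  set L : S → ℝ≥0∞ := OrderHom.lfp Φ with hL
  have hLI : L ≤ I := OrderHom.lfp_le Φ h1
  have hfix : ∀ s, L s = g s + ∑' s', (if φ s' then L s' else 0) * P s' s := by
    intro s
    conv_lhs => rw [hL, ← OrderHom.map_lfp Φ]
    exact hΦ _ s
  -- total mass of L
  have hmass : ∑' s, L s = (∑' s, g s) + ∑' s', (if φ s' then L s' else 0) := by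
    calc ∑' s, L s = ∑' s, (g s + ∑' s', (if φ s' then L s' else 0) * P s' s) := by
          exact tsum_congr hfix
      _ = (∑' s, g s) + ∑' s, ∑' s', (if φ s' then L s' else 0) * P s' s :=
          ENNReal.tsum_add
      _ = (∑' s, g s) + ∑' s', ∑' s, (if φ s' then L s' else 0) * P s' s := by
          rw [ENNReal.tsum_comm]
      _ = (∑' s, g s) + ∑' s', (if φ s' then L s' else 0) * ∑' s, P s' s := by
          congr 1
          exact tsum_congr fun s' => ENNReal.tsum_mul_left
      _ = (∑' s, g s) + ∑' s', (if φ s' then L s' else 0) := by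
          congr 1
          refine tsum_congr fun s' => ?_
          by_cases h : φ s'
          · simp [h, hrow s' h]
          · simp [h]
  -- split total mass of L
  have hsplit : ∑' s, L s
      = (∑' s, (if φ s then L s else 0)) + ∑' s, (if φ s then 0 else L s) := by
    rw [← ENNReal.tsum_add]
    refine tsum_congr fun s => ?_
    by_cases h : φ s <;> simp [h]
  have hLle : ∑' s, L s ≤ ∑' s, I s := ENNReal.tsum_le_tsum fun s => hLI s
  have hfin : ∑' s, (if φ s then L s else 0) ≠ ∞ := by
    refine ne_top_of_le_ne_top h2 (le_trans ?_ hLle)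
    refine ENNReal.tsum_le_tsum fun s => ?_
    by_cases h : φ s <;> simp [h]
  have hkey : ∑' s, (if φ s then 0 else L s) = ∑' s, (if φ s then 0 else I s) := by
    rw [h3]
    have := hsplit.symm.trans hmass
    rw [add_comm (∑' s, g s)] at this
    exact (ENNReal.add_right_inj hfin).mp this
  intro s hs
  by_contra hne
  have hlt : L s < I s := lt_of_le_of_ne (hLI s) hne
  have hltite : (if φ s then 0 else L s) < (if φ s then 0 else I s) := by
    simp [hs, hlt]
  have hfin2 : ∑' s, (if φ s then 0 else L s) ≠ ∞ := by
    refine ne_top_of_le_ne_top h2 (le_trans ?_ hLle)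
    refine ENNReal.tsum_le_tsum fun s => ?_
    by_cases h : φ s <;> simp [h]
  have := ENNReal.tsum_lt_tsum (f := fun a => if φ a then 0 else L a)
    (g := fun a => if φ a then 0 else I a) hfin2
    (fun a => by by_cases h : φ a <;> simp [h, hLI a]) hltite
  exact absurd hkey (ne_of_lt this)
end

section
/- Let S be a type, φ : S → Prop a decidable guard predicate, P : S → S → ℝ≥0∞, and g : S → ℝ≥0∞. Define Φ(ν)(s) := g(s) + ∑'_{s'} (if φ(s') then ν(s') else 0)·P(s', s), a monotone map on the complete lattice of functions S → ℝ≥0∞, with least fixed point lfp Φ. Define the backward operator B : (S → ℝ≥0∞) → (S → ℝ≥0∞) by B(f)(s) := if φ(s) then ∑'_{t} P(s, t)·f(t) else 0, and the expected runtime function E(s) := ∑'_{k ∈ ℕ} (B^[k] 𝟙)(s), where 𝟙 is the constant-one function. Then the total mass of the least fixed point equals the expected runtime weighted by the initial measure: ∑'_{s} (lfp Φ)(s) = ∑'_{s} g(s)·E(s). -/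
/-!
Write `T` for the guarded push-forward `ν ↦ ∑' s', (if φ s' then ν s' else 0) * P s' ·`, so that
`Φ ν = g + T ν`. Since `T` is additive and commutes with countable sums, the least fixed point
of `Φ` is the Neumann series `∑' k, T^[k] g`. The backward operator `B` is the adjoint of `T`
for the pairing `⟨μ, f⟩ = ∑' s, μ s * f s`, hence so are their iterates, and
`∑' s, (lfp Φ) s = ∑' k, ⟨T^[k] g, 1⟩ = ∑' k, ⟨g, B^[k] 1⟩ = ⟨g, E⟩`.
-/

open scoped ENNReal

theorem AddMonoidHom.monotone_of_canonicallyOrderedAdd {M N : Type*}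
    [AddCommMonoid M] [PartialOrder M] [CanonicallyOrderedAdd M]
    [AddCommMonoid N] [PartialOrder N] [CanonicallyOrderedAdd N] (T : M →+ N) :
    Monotone T := by
  intro a b hab
  obtain ⟨c, rfl⟩ := exists_add_of_le hab
  rw [map_add]
  exact le_self_add

namespace ENNReal

variable {S : Type*}

theorem lfp_eq_tsum_iterate (T : (S → ℝ≥0∞) →+ (S → ℝ≥0∞))
    (hT : ∀ μ : ℕ → S → ℝ≥0∞, T (∑' k, μ k) = ∑' k, T (μ k)) (g : S → ℝ≥0∞)
    (Φ : (S → ℝ≥0∞) →o (S → ℝ≥0∞)) (hΦ : ∀ ν, Φ ν = g + T ν) :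
    OrderHom.lfp Φ = ∑' k, T^[k] g := by
  have h_fixed : Φ (∑' k, T^[k] g) = ∑' k, T^[k] g := by
    rw [hΦ, hT, tsum_eq_zero_add' (f := fun k => T^[k] g)
      (Pi.summable.2 fun _ => ENNReal.summable)]
    simp only [Function.iterate_succ_apply', Function.iterate_zero_apply]
  have h_partial : ∀ n, ∑ k ∈ Finset.range n, T^[k] g ≤ OrderHom.lfp Φ := by
    intro n
    induction n with
    | zero => simp
    | succ n ih =>
      calc ∑ k ∈ Finset.range (n + 1), T^[k] g
          = g + T (∑ k ∈ Finset.range n, T^[k] g) := by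
            simp only [Finset.sum_range_succ', map_sum, Function.iterate_succ_apply',
              Function.iterate_zero_apply, add_comm]
        _ ≤ g + T (OrderHom.lfp Φ) := by
            gcongr
            exact T.monotone_of_canonicallyOrderedAdd ih
        _ = OrderHom.lfp Φ := by rw [← hΦ, OrderHom.map_lfp]
  refine le_antisymm (OrderHom.lfp_le Φ h_fixed.le) fun s => ?_
  rw [ENNReal.tsum_apply, ENNReal.tsum_eq_iSup_nat]
  exact iSup_le fun n => by simpa only [Finset.sum_apply] using h_partial n s

theorem tsum_iterate_mul_eq_tsum_mul_iterate {T B : (S → ℝ≥0∞) → (S → ℝ≥0∞)}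
    (hadj : ∀ μ f, ∑' t, T μ t * f t = ∑' s, μ s * B f s) (k : ℕ) (μ f : S → ℝ≥0∞) :
    ∑' t, T^[k] μ t * f t = ∑' s, μ s * B^[k] f s := by
  induction k generalizing μ with
  | zero => rfl
  | succ k ih => rw [Function.iterate_succ_apply, ih, hadj, Function.iterate_succ_apply']

noncomputable def kernelPush (K : S → S → ℝ≥0∞) : (S → ℝ≥0∞) →+ (S → ℝ≥0∞) where
  toFun μ t := ∑' s, μ s * K s t
  map_zero' := by
    funext t
    simp
  map_add' μ ν := by
    funext t
    simp only [Pi.add_apply, add_mul, ENNReal.tsum_add]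

theorem kernelPush_apply (K : S → S → ℝ≥0∞) (μ : S → ℝ≥0∞) (t : S) :
    kernelPush K μ t = ∑' s, μ s * K s t :=
  rfl

theorem kernelPush_tsum (K : S → S → ℝ≥0∞) (μ : ℕ → S → ℝ≥0∞) :
    kernelPush K (∑' k, μ k) = ∑' k, kernelPush K (μ k) := by
  funext t
  simp only [kernelPush_apply, ENNReal.tsum_apply, ← ENNReal.tsum_mul_right]
  exact ENNReal.tsum_comm

theorem tsum_kernelPush_mul (K : S → S → ℝ≥0∞) (μ f : S → ℝ≥0∞) :
    ∑' t, kernelPush K μ t * f t = ∑' s, μ s * ∑' t, K s t * f t := by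
  simp only [kernelPush_apply, ← ENNReal.tsum_mul_right, ← ENNReal.tsum_mul_left, mul_assoc]
  exact ENNReal.tsum_comm

end ENNReal

/-- The total mass of the occupation-measure least fixed point equals the
expected runtime (expected number of loop-guard evaluations) weighted by the
initial measure. -/
theorem lfp_mass_eq_expected_runtime {S : Type*} (φ : S → Prop) [DecidablePred φ]
    (P : S → S → ℝ≥0∞) (g : S → ℝ≥0∞)
    (Φ : (S → ℝ≥0∞) →o (S → ℝ≥0∞))
    (hΦ : ∀ ν s, Φ ν s = g s + ∑' s', (if φ s' then ν s' else 0) * P s' s)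
    (B : (S → ℝ≥0∞) → (S → ℝ≥0∞))
    (hB : ∀ f s, B f s = if φ s then ∑' t, P s t * f t else 0)
    (E : S → ℝ≥0∞)
    (hE : ∀ s, E s = ∑' k : ℕ, (B^[k] (fun _ => 1)) s) :
    ∑' s, OrderHom.lfp Φ s = ∑' s, g s * E s := by
  set T := ENNReal.kernelPush fun s t => if φ s then P s t else 0
  have hΦT : ∀ ν, Φ ν = g + T ν := fun ν => funext fun s => by
    simp only [hΦ, Pi.add_apply, T, ENNReal.kernelPush_apply, ite_mul, mul_ite, zero_mul,
      mul_zero]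
  have hadj : ∀ μ f, ∑' t, T μ t * f t = ∑' s, μ s * B f s := fun μ f => by
    rw [ENNReal.tsum_kernelPush_mul]
    congr 1 with s
    by_cases hs : φ s <;> simp [hB, hs]
  calc ∑' s, OrderHom.lfp Φ s
      = ∑' k, ∑' s, T^[k] g s * 1 := by
        simp only [ENNReal.lfp_eq_tsum_iterate T (ENNReal.kernelPush_tsum _) g Φ hΦT,
          ENNReal.tsum_apply, mul_one]
        exact ENNReal.tsum_comm
    _ = ∑' s, g s * E s := by
        simp only [ENNReal.tsum_iterate_mul_eq_tsum_mul_iterate hadj, hE,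
          ← ENNReal.tsum_mul_left]
        exact ENNReal.tsum_comm
end

section
/- Define Φ on functions ℕ × ℕ → ℝ≥0∞ by Φ(ν)(x, c) := (if x = 1 ∧ c = 0 then 1 else 0) + (if x = 1 ∧ 1 ≤ c then (1/2)·ν(1, c − 1) else 0) + (if x = 0 then (1/2)·ν(1, c) else 0). Then Φ is monotone, and its least fixed point is the function (x, c) ↦ if x = 1 then (1/2)^c else if x = 0 then (1/2)^(c+1) else 0. -/
open scoped ENNReal

/-- The characteristic map of the geometric loop `while (x = 1) { c := c + 1 [1/2] x := 0 }`
started from the Dirac distribution on `(x, c) = (1, 0)`. -/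
noncomputable def geoPhi : (ℕ × ℕ → ℝ≥0∞) → (ℕ × ℕ → ℝ≥0∞) := fun ν p =>
  (if p.1 = 1 ∧ p.2 = 0 then 1 else 0)
    + (if p.1 = 1 ∧ 1 ≤ p.2 then (1 / 2) * ν (1, p.2 - 1) else 0)
    + (if p.1 = 0 then (1 / 2) * ν (1, p.2) else 0)

lemma geoPhi_mono : Monotone geoPhi := by
  intro a b hab p
  unfold geoPhi
  gcongr (_ + ?_ + ?_) <;> split <;> first | rfl | gcongr; exact hab _

lemma fixed_eq (g : ℕ × ℕ → ℝ≥0∞) (hg : geoPhi g = g) :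
    g = fun p : ℕ × ℕ =>
      if p.1 = 1 then (1 / 2 : ℝ≥0∞) ^ p.2
      else if p.1 = 0 then (1 / 2 : ℝ≥0∞) ^ (p.2 + 1) else 0 := by
  have key : ∀ c, g (1, c) = (1 / 2 : ℝ≥0∞) ^ c := by
    intro c
    induction c with
    | zero =>
      have := congrFun hg (1, 0)
      simp [geoPhi] at this
      simp [← this]
    | succ n ih =>
      have := congrFun hg (1, n + 1)
      simp [geoPhi] at this
      rw [← this, ih, pow_succ]
      rw [one_div, mul_comm]
  funext p
  obtain ⟨x, c⟩ := p
  match x with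
  | 1 => simpa using key c
  | 0 =>
    have := congrFun hg (0, c)
    simp [geoPhi] at this
    rw [← this, key, pow_succ]
    rw [one_div, mul_comm]
    simp
  | (n+2) =>
    have := congrFun hg (n + 2, c)
    simp [geoPhi] at this
    simp [← this]

/-- `geoPhi` is monotone, and its least fixed point (the occupation measure of the geometric
loop) is `(x, c) ↦ if x = 1 then (1/2)^x else if x = 0 then (1/2)^(c+1) else 0`. -/
theorem geoPhi_monotone_and_lfp :
    ∃ h : Monotone geoPhi,
      OrderHom.lfp ⟨geoPhi, h⟩ =
        fun p : ℕ × ℕ =>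
          if p.1 = 1 then (1 / 2 : ℝ≥0∞) ^ p.2
          else if p.1 = 0 then (1 / 2 : ℝ≥0∞) ^ (p.2 + 1) else 0 := by
  refine ⟨geoPhi_mono, ?_⟩
  apply fixed_eq
  exact OrderHom.map_lfp ⟨geoPhi, geoPhi_mono⟩
end

section
/- Fix N ≥ 2, and for i < N define pre_N(i) := {x : ℕ | x < N ∧ ∃ k, 2^k ≡ x (mod N) ∧ 2^(k+1) ≡ i (mod N)}, the set of predecessors of i in the sequence of powers of two modulo N. Then for every i < N with i ≠ 1, the cardinality of pre_N(i) equals: 0 if F_N(i) = ∞; 2 if F_N(i) = S_N; and 1 if F_N(i) is finite and F_N(i) ≠ S_N. -/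
/-- `F N i`: the least `k` with `2^k ≡ i (mod N)`, or `∞` if no such `k` exists. -/
noncomputable def F (N i : ℕ) : ℕ∞ :=
  sInf {k : ℕ∞ | ∃ m : ℕ, k = (m : ℕ∞) ∧ 2 ^ m ≡ i [MOD N]}

/-- `S N`: the least `S` for which there exists `L ≥ 1` with
`2^(k+L) ≡ 2^k (mod N)` for all `k ≥ S`. -/
noncomputable def S (N : ℕ) : ℕ :=
  sInf {s : ℕ | ∃ l : ℕ, 1 ≤ l ∧ ∀ k : ℕ, s ≤ k → 2 ^ (k + l) ≡ 2 ^ k [MOD N]}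

lemma pow_step (N a b t : ℕ) (h : 2 ^ a ≡ 2 ^ b [MOD N]) :
    2 ^ (a + t) ≡ 2 ^ (b + t) [MOD N] := by
  simpa [pow_add] using h.mul_right (2 ^ t)

lemma mem_Sset (N a b : ℕ) (hab : a < b) (h : 2 ^ a ≡ 2 ^ b [MOD N]) :
    a ∈ {s : ℕ | ∃ l : ℕ, 1 ≤ l ∧ ∀ k : ℕ, s ≤ k → 2 ^ (k + l) ≡ 2 ^ k [MOD N]} := by
  refine ⟨b - a, by omega, fun k hk => ?_⟩
  have h1 := pow_step N b a (k - a) h.symm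
  have e1 : b + (k - a) = k + (b - a) := by omega
  have e2 : a + (k - a) = k := by omega
  rw [e1, e2] at h1
  exact h1

lemma S_le (N a b : ℕ) (hab : a < b) (h : 2 ^ a ≡ 2 ^ b [MOD N]) : S N ≤ a :=
  Nat.sInf_le (mem_Sset N a b hab h)

lemma Sset_nonempty (N : ℕ) (hN : 2 ≤ N) :
    {s : ℕ | ∃ l : ℕ, 1 ≤ l ∧ ∀ k : ℕ, s ≤ k → 2 ^ (k + l) ≡ 2 ^ k [MOD N]}.Nonempty := by
  obtain ⟨x, hx, y, hy, hxy, hfe⟩ :=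
    Finset.exists_ne_map_eq_of_card_lt_of_maps_to (s := Finset.range (N + 1))
      (t := Finset.range N) (by simp) (f := fun k => 2 ^ k % N)
      (fun k _ => Finset.mem_range.mpr (Nat.mod_lt _ (by omega)))
  have hfe' : 2 ^ x ≡ 2 ^ y [MOD N] := hfe
  rcases lt_or_gt_of_ne hxy with h | h
  · exact ⟨x, mem_Sset N x y h hfe'⟩
  · exact ⟨y, mem_Sset N y x h hfe'.symm⟩

lemma S_spec (N : ℕ) (hN : 2 ≤ N) :
    ∃ l : ℕ, 1 ≤ l ∧ ∀ k : ℕ, S N ≤ k → 2 ^ (k + l) ≡ 2 ^ k [MOD N] :=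
  Nat.sInf_mem (Sset_nonempty N hN)

lemma inj_on_cycle (N : ℕ) (hN : 2 ≤ N) (a b : ℕ) (ha : S N ≤ a) (hb : S N ≤ b)
    (h : 2 ^ (a + 1) ≡ 2 ^ (b + 1) [MOD N]) : 2 ^ a ≡ 2 ^ b [MOD N] := by
  obtain ⟨L, hL1, hL⟩ := S_spec N hN
  have h1 := pow_step N (a + 1) (b + 1) (L - 1) h
  have e1 : a + 1 + (L - 1) = a + L := by omega
  have e2 : b + 1 + (L - 1) = b + L := by omega
  rw [e1, e2] at h1
  exact (hL a ha).symm.trans (h1.trans (hL b hb))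

lemma F_eq_top_iff (N i : ℕ) : F N i = ⊤ ↔ ∀ m : ℕ, ¬ 2 ^ m ≡ i [MOD N] := by
  constructor
  · intro h m hm
    have h2 : F N i ≤ (m : ℕ∞) := sInf_le ⟨m, rfl, hm⟩
    rw [h, top_le_iff] at h2
    exact (WithTop.natCast_ne_top m) h2
  · intro h
    have he : {k : ℕ∞ | ∃ m : ℕ, k = (m : ℕ∞) ∧ 2 ^ m ≡ i [MOD N]} = ∅ := by
      ext k
      simp only [Set.mem_setOf_eq, Set.mem_empty_iff_false, iff_false, not_exists]
      rintro m ⟨rfl, hm⟩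
      exact h m hm
    rw [F, he, sInf_empty]

lemma F_eq_coe (N i : ℕ) (h : {m : ℕ | 2 ^ m ≡ i [MOD N]}.Nonempty) :
    F N i = ((sInf {m : ℕ | 2 ^ m ≡ i [MOD N]} : ℕ) : ℕ∞) := by
  apply le_antisymm
  · exact sInf_le ⟨_, rfl, Nat.sInf_mem h⟩
  · apply le_sInf
    rintro k ⟨m, rfl, hm⟩
    exact Nat.cast_le.mpr (Nat.sInf_le hm)

/-- `pre N i`: the set of predecessors of `i` in the sequence of powers of two modulo `N`. -/
def pre (N i : ℕ) : Set ℕ :=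
  {x : ℕ | x < N ∧ ∃ k : ℕ, 2 ^ k ≡ x [MOD N] ∧ 2 ^ (k + 1) ≡ i [MOD N]}


lemma main_fin (N : ℕ) (hN : 2 ≤ N) (i : ℕ) (hi : i < N) (hi1 : i ≠ 1)
    (h : {m : ℕ | 2 ^ m ≡ i [MOD N]}.Nonempty) :
    (sInf {m : ℕ | 2 ^ m ≡ i [MOD N]} = S N → (pre N i).encard = 2) ∧
    (sInf {m : ℕ | 2 ^ m ≡ i [MOD N]} ≠ S N → (pre N i).encard = 1) := by
  set f := sInf {m : ℕ | 2 ^ m ≡ i [MOD N]} with hfdef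
  have hf : 2 ^ f ≡ i [MOD N] := Nat.sInf_mem h
  have hfmin : ∀ m : ℕ, 2 ^ m ≡ i [MOD N] → f ≤ m := fun m hm => Nat.sInf_le hm
  have hf1 : 1 ≤ f := by
    rcases Nat.eq_zero_or_pos f with h0 | h0
    · exfalso
      rw [h0] at hf
      have h1 : 1 % N = i % N := hf
      rw [Nat.mod_eq_of_lt (by omega), Nat.mod_eq_of_lt hi] at h1
      exact hi1 h1.symm
    · exact h0
  obtain ⟨L, hL1, hL⟩ := S_spec N hN
  constructor
  · intro hfS
    have hS1 : 1 ≤ S N := hfS ▸ hf1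
    have hab : 2 ^ (S N - 1) % N ≠ 2 ^ (S N + L - 1) % N := by
      intro hEq
      have := S_le N (S N - 1) (S N + L - 1) (by omega) hEq
      omega
    have hset : pre N i = {2 ^ (S N - 1) % N, 2 ^ (S N + L - 1) % N} := by
      ext x
      simp only [pre, Set.mem_setOf_eq, Set.mem_insert_iff, Set.mem_singleton_iff]
      constructor
      · rintro ⟨hxN, k, hk1, hk2⟩
        have hkf : f ≤ k + 1 := hfmin _ hk2
        have hx : x = 2 ^ k % N := by
          have h1 : 2 ^ k % N = x % N := hk1
          rw [Nat.mod_eq_of_lt hxN] at h1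
          exact h1.symm
        rcases eq_or_lt_of_le hkf with hEq | hlt
        · left
          rw [hx, show k = S N - 1 by omega]
        · right
          have hkS : S N ≤ k := by omega
          have h2 : 2 ^ (k + 1) ≡ 2 ^ (S N + L - 1 + 1) [MOD N] := by
            rw [show S N + L - 1 + 1 = S N + L by omega]
            exact hk2.trans ((hfS ▸ hf).symm.trans (hL (S N) le_rfl).symm)
          have h3 := inj_on_cycle N hN k (S N + L - 1) hkS (by omega) h2
          exact hx.trans h3
      · rintro (rfl | rfl)
        · refine ⟨Nat.mod_lt _ (by omega), S N - 1, by simp [Nat.ModEq], ?_⟩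
          rw [show S N - 1 + 1 = S N by omega, ← hfS]
          exact hf
        · refine ⟨Nat.mod_lt _ (by omega), S N + L - 1, by simp [Nat.ModEq], ?_⟩
          rw [show S N + L - 1 + 1 = S N + L by omega]
          exact (hL (S N) le_rfl).trans (hfS ▸ hf)
    rw [hset, Set.encard_pair hab]
  · intro hfne
    have hset : pre N i = {2 ^ (f - 1) % N} := by
      ext x
      simp only [pre, Set.mem_setOf_eq, Set.mem_singleton_iff]
      constructor
      · rintro ⟨hxN, k, hk1, hk2⟩
        have hkf : f ≤ k + 1 := hfmin _ hk2
        have hx : x = 2 ^ k % N := by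
          have h1 : 2 ^ k % N = x % N := hk1
          rw [Nat.mod_eq_of_lt hxN] at h1
          exact h1.symm
        rcases eq_or_lt_of_le hkf with hEq | hlt
        · rw [hx, show k = f - 1 by omega]
        · have hSf : S N ≤ f := S_le N f (k + 1) (by omega) (hf.trans hk2.symm)
          have hSf' : S N < f := lt_of_le_of_ne hSf (Ne.symm hfne)
          have h2 : 2 ^ (k + 1) ≡ 2 ^ (f - 1 + 1) [MOD N] := by
            rw [show f - 1 + 1 = f by omega]
            exact hk2.trans hf.symm
          have h3 := inj_on_cycle N hN k (f - 1) (by omega) (by omega) h2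
          exact hx.trans h3
      · rintro rfl
        refine ⟨Nat.mod_lt _ (by omega), f - 1, by simp [Nat.ModEq], ?_⟩
        rw [show f - 1 + 1 = f by omega]
        exact hf
    rw [hset, Set.encard_singleton]

/-- For `i < N`, `i ≠ 1`, the number of predecessors of `i` in the sequence of powers of
two modulo `N` is `0` if `i` never occurs, `2` if it first occurs exactly at the start of
the repeating part, and `1` otherwise. -/
theorem pre_card (N : ℕ) (hN : 2 ≤ N) (i : ℕ) (hi : i < N) (hi1 : i ≠ 1) :
    (F N i = ⊤ → (pre N i).encard = 0) ∧
    (F N i = ((S N : ℕ) : ℕ∞) → (pre N i).encard = 2) ∧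
    (F N i ≠ ⊤ → F N i ≠ ((S N : ℕ) : ℕ∞) → (pre N i).encard = 1) := by
  refine ⟨?_, ?_, ?_⟩
  · intro h
    rw [Set.encard_eq_zero]
    ext x
    simp only [pre, Set.mem_setOf_eq, Set.mem_empty_iff_false, iff_false, not_and]
    rintro hxN ⟨k, hk1, hk2⟩
    exact (F_eq_top_iff N i).mp h (k + 1) hk2
  · intro h
    have hne : {m : ℕ | 2 ^ m ≡ i [MOD N]}.Nonempty := by
      by_contra hcon
      rw [Set.not_nonempty_iff_eq_empty] at hcon
      have : F N i = ⊤ := (F_eq_top_iff N i).mpr (fun m hm => by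
        have : m ∈ {m : ℕ | 2 ^ m ≡ i [MOD N]} := hm
        rw [hcon] at this; exact this)
      rw [this] at h
      exact (WithTop.natCast_ne_top (S N)) h.symm
    have hF := F_eq_coe N i hne
    rw [hF] at h
    exact (main_fin N hN i hi hi1 hne).1 (by exact_mod_cast h)
  · intro h1 h2
    have hne : {m : ℕ | 2 ^ m ≡ i [MOD N]}.Nonempty := by
      by_contra hcon
      rw [Set.not_nonempty_iff_eq_empty] at hcon
      exact h1 ((F_eq_top_iff N i).mpr (fun m hm => by
        have : m ∈ {m : ℕ | 2 ^ m ≡ i [MOD N]} := hm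
        rw [hcon] at this; exact this))
    have hF := F_eq_coe N i hne
    rw [hF] at h2
    exact (main_fin N hN i hi hi1 hne).2 (fun hc => h2 (by exact_mod_cast hc))
end
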